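/- arXiv:2309.12164 — 2 statements merged into one kernel-verified Lean document; each statement's English description precedes it below -/
import Mathlib

section
/- In subStraTT, definitional equality coincides with joinability under parallel reduction: A ≡ B if and only if there exists C such that A ⇒* C and B ⇒* C, where ⇒ is parallel reduction and ⇒* its reflexive–transitive closure. -/
/-! subStraTT without global definitions, in de Bruijn representation:
a single universe ⋆ with type-in-type, stratified dependent function types
`Πx:^j A. B`, abstractions, applications, the empty type and its eliminator.
Levels are natural numbers. -/

inductive Tm : Type
  | star
  | var (x : ℕ)
  | pi (j : ℕ) (A B : Tm)
  | lam (b : Tm)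
  | app (b a : Tm)
  | bot
  | absurd (b : Tm)
  deriving DecidableEq

namespace Tm

/-- Shift free de Bruijn indices `≥ c` up by `d`. -/
def shift (d c : ℕ) : Tm → Tm
  | star => star
  | var x => if x < c then var x else var (x + d)
  | pi j A B => pi j (shift d c A) (shift d (c + 1) B)
  | lam b => lam (shift d (c + 1) b)
  | app b a => app (shift d c b) (shift d c a)
  | bot => bot
  | absurd b => absurd (shift d c b)

/-- Substitute `u` for de Bruijn index `k` (decrementing greater indices). -/
def subst (k : ℕ) (u : Tm) : Tm → Tm
  | star => star
  | var x => if x < k then var x else if x = k then shift k 0 u else var (x - 1)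
  | pi j A B => pi j (subst k u A) (subst (k + 1) u B)
  | lam b => lam (subst (k + 1) u b)
  | app b a => app (subst k u b) (subst k u a)
  | bot => bot
  | absurd b => absurd (subst k u b)

end Tm

/-- Parallel reduction `a ⇒ b`: all visible β-redexes may be reduced
simultaneously in one step. -/
inductive Par : Tm → Tm → Prop
  | star : Par .star .star
  | var (x) : Par (.var x) (.var x)
  | bot : Par .bot .bot
  | pi {j A A' B B'} : Par A A' → Par B B' → Par (.pi j A B) (.pi j A' B')
  | lam {b b'} : Par b b' → Par (.lam b) (.lam b')
  | app {b b' a a'} : Par b b' → Par a a' → Par (.app b a) (.app b' a')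
  | beta {b b' a a'} : Par b b' → Par a a' →
      Par (.app (.lam b) a) (Tm.subst 0 a' b')
  | absurd {b b'} : Par b b' → Par (.absurd b) (.absurd b')

/-- `a ⇒* b`: reflexive–transitive closure of parallel reduction. -/
def Pars : Tm → Tm → Prop := Relation.ReflTransGen Par

/-- Joinability `a ⇔ b`: `a` and `b` parallel-reduce to a common term. -/
def Conv (a b : Tm) : Prop := ∃ c, Pars a c ∧ Pars b c

/-- Untyped definitional equality `a ≡ b`: the least reflexive, symmetric,
transitive congruence containing β-equivalence. -/
inductive DEq : Tm → Tm → Prop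
  | refl (a) : DEq a a
  | sym : DEq a b → DEq b a
  | trans : DEq a b → DEq b c → DEq a c
  | beta (b a) : DEq (.app (.lam b) a) (Tm.subst 0 a b)
  | pi {j A A' B B'} : DEq A A' → DEq B B' → DEq (.pi j A B) (.pi j A' B')
  | lam {b b'} : DEq b b' → DEq (.lam b) (.lam b')
  | app {b b' a a'} : DEq b b' → DEq a a' → DEq (.app b a) (.app b' a')
  | absurd {b b'} : DEq b b' → DEq (.absurd b) (.absurd b')

namespace Tm

theorem shift_shift_merge {c' c k d : ℕ} (h1 : c' ≤ c) (h2 : c ≤ c' + k) (t : Tm) :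
    shift d c (shift k c' t) = shift (d + k) c' t := by
  induction t generalizing c' c with
  | star => rfl
  | bot => rfl
  | var x =>
    by_cases h3 : x < c'
    · simp [shift, h3, lt_of_lt_of_le h3 h1]
    · simp only [shift, if_neg h3, if_neg (show ¬ x + k < c by omega)]
      congr 1; omega
  | pi j A B ihA ihB =>
    simp only [shift]
    rw [ihA h1 h2, ihB (show c' + 1 ≤ c + 1 by omega) (show c + 1 ≤ c' + 1 + k by omega)]
  | lam b ih =>
    simp only [shift]
    rw [ih (show c' + 1 ≤ c + 1 by omega) (show c + 1 ≤ c' + 1 + k by omega)]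
  | app b a ihb iha => simp only [shift]; rw [ihb h1 h2, iha h1 h2]
  | absurd b ih => simp only [shift]; rw [ih h1 h2]

theorem shift_shift_comm {c c' k d : ℕ} (h : c ≤ c') (t : Tm) :
    shift d (c' + k) (shift k c t) = shift k c (shift d c' t) := by
  induction t generalizing c c' with
  | star => rfl
  | bot => rfl
  | var x =>
    by_cases h1 : x < c
    · simp [shift, h1, show x < c' + k by omega, show x < c' by omega]
    · by_cases h2 : x < c'
      · simp [shift, h1, h2, show x + k < c' + k by omega]
      · simp only [shift, if_neg h1, if_neg h2, if_neg (show ¬ x + k < c' + k by omega),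
          if_neg (show ¬ x + d < c by omega)]
        congr 1; omega
  | pi j A B ihA ihB =>
    simp only [shift]
    rw [ihA h, show c' + k + 1 = c' + 1 + k by omega,
      ihB (show c + 1 ≤ c' + 1 by omega)]
  | lam b ih =>
    simp only [shift]
    rw [show c' + k + 1 = c' + 1 + k by omega, ih (show c + 1 ≤ c' + 1 by omega)]
  | app b a ihb iha => simp only [shift]; rw [ihb h, iha h]
  | absurd b ih => simp only [shift]; rw [ih h]

theorem shift_subst {k c d : ℕ} (h : k ≤ c) (u t : Tm) :
    shift d c (subst k u t) = subst k (shift d (c - k) u) (shift d (c + 1) t) := by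
  induction t generalizing k c with
  | star => rfl
  | bot => rfl
  | var x =>
    rcases lt_trichotomy x k with h1 | h1 | h1
    · simp [shift, subst, h1, show x < c by omega, show x < c + 1 by omega]
    · subst h1
      have key := shift_shift_comm (c := 0) (c' := c - x) (k := x) (d := d) (Nat.zero_le _) u
      rw [show c - x + x = c by omega] at key
      simp [shift, subst, show x < c + 1 by omega, key]
    · by_cases h2 : x < c + 1
      · simp [shift, subst, show ¬ x < k by omega, show x ≠ k by omega, h2,
          show x - 1 < c by omega]
      · simp only [subst, shift, if_neg (show ¬ x < k by omega),
          if_neg (show x ≠ k by omega), if_neg h2, if_neg (show ¬ x - 1 < c by omega),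
          if_neg (show ¬ x + d < k by omega), if_neg (show x + d ≠ k by omega)]
        congr 1; omega
  | pi j A B ihA ihB =>
    simp only [shift, subst]
    rw [ihA h]
    have hB := ihB (show k + 1 ≤ c + 1 by omega)
    rw [show c + 1 - (k + 1) = c - k by omega] at hB
    rw [hB]
  | lam b ih =>
    simp only [shift, subst]
    have hb := ih (show k + 1 ≤ c + 1 by omega)
    rw [show c + 1 - (k + 1) = c - k by omega] at hb
    rw [hb]
  | app b a ihb iha => simp only [shift, subst]; rw [ihb h, iha h]
  | absurd b ih => simp only [shift, subst]; rw [ih h]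

theorem subst_shift_cancel {c j d : ℕ} (h1 : c ≤ j) (h2 : j < c + d) (w t : Tm) :
    subst j w (shift d c t) = shift (d - 1) c t := by
  induction t generalizing c j with
  | star => rfl
  | bot => rfl
  | var x =>
    by_cases h3 : x < c
    · simp [shift, subst, h3, show x < j by omega]
    · simp only [shift, subst, if_neg h3, if_neg (show ¬ x + d < j by omega),
        if_neg (show x + d ≠ j by omega)]
      congr 1; omega
  | pi j' A B ihA ihB =>
    simp only [shift, subst]
    rw [ihA h1 h2, ihB (show c + 1 ≤ j + 1 by omega) (show j + 1 < c + 1 + d by omega)]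
  | lam b ih =>
    simp only [shift, subst]
    rw [ih (show c + 1 ≤ j + 1 by omega) (show j + 1 < c + 1 + d by omega)]
  | app b a ihb iha => simp only [shift, subst]; rw [ihb h1 h2, iha h1 h2]
  | absurd b ih => simp only [shift, subst]; rw [ih h1 h2]

theorem subst_shift_lift {c k d : ℕ} (h : c ≤ k) (u t : Tm) :
    subst (k + d) u (shift d c t) = shift d c (subst k u t) := by
  induction t generalizing c k with
  | star => rfl
  | bot => rfl
  | var x =>
    by_cases h0 : x < c
    · simp [shift, subst, h0, show x < k + d by omega, show x < k by omega]
    · rcases lt_trichotomy x k with h1 | h1 | h1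
      · simp [shift, subst, h0, show x + d < k + d by omega, h1]
      · subst h1
        simp only [shift, subst, if_neg h0, if_neg (show ¬ x + d < x + d by omega),
          if_pos rfl, if_neg (show ¬ x < x by omega), if_true]
        rw [shift_shift_merge (Nat.zero_le c) (show c ≤ 0 + x by omega) u, Nat.add_comm x d]
      · simp only [shift, subst, if_neg h0, if_neg (show ¬ x + d < k + d by omega),
          if_neg (show x + d ≠ k + d by omega), if_neg (show ¬ x < k by omega),
          if_neg (show x ≠ k by omega), if_neg (show ¬ x - 1 < c by omega)]
        congr 1; omega
  | pi j A B ihA ihB =>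
    simp only [shift, subst]
    rw [ihA h]
    have hB := ihB (show c + 1 ≤ k + 1 by omega)
    rw [show k + 1 + d = k + d + 1 by omega] at hB
    rw [hB]
  | lam b ih =>
    simp only [shift, subst]
    have hb := ih (show c + 1 ≤ k + 1 by omega)
    rw [show k + 1 + d = k + d + 1 by omega] at hb
    rw [hb]
  | app b a ihb iha => simp only [shift, subst]; rw [ihb h, iha h]
  | absurd b ih => simp only [shift, subst]; rw [ih h]

theorem subst_subst {j k : ℕ} (h : j ≤ k) (u v t : Tm) :
    subst k u (subst j v t) = subst j (subst (k - j) u v) (subst (k + 1) u t) := by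
  induction t generalizing j k with
  | star => rfl
  | bot => rfl
  | var x =>
    rcases lt_trichotomy x j with h1 | h1 | h1
    · simp [subst, h1, show x < k by omega, show x < k + 1 by omega]
    · subst h1
      have key := subst_shift_lift (c := 0) (k := k - x) (d := x) (Nat.zero_le _) u v
      rw [show k - x + x = k by omega] at key
      simp [subst, show x < k + 1 by omega, key]
    · rcases lt_trichotomy x (k + 1) with h2 | h2 | h2
      · simp [subst, show ¬ x < j by omega, show x ≠ j by omega, h2,
          show x - 1 < k by omega]
      · subst h2
        have key := subst_shift_cancel (c := 0) (j := j) (d := k + 1)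
          (Nat.zero_le _) (by omega) (subst (k - j) u v) u
        rw [show k + 1 - 1 = k by omega] at key
        simp [subst, show ¬ k + 1 < j by omega, show k + 1 ≠ j by omega,
          show ¬ k + 1 - 1 < k by omega, show k + 1 - 1 = k by omega, key]
      · simp [subst, show ¬ x < j by omega, show x ≠ j by omega,
          show ¬ x < k + 1 by omega, show x ≠ k + 1 by omega,
          show ¬ x - 1 < k by omega, show x - 1 ≠ k by omega,
          show ¬ x - 1 < j by omega, show x - 1 ≠ j by omega]
  | pi j' A B ihA ihB =>
    simp only [subst]
    rw [ihA h]
    have hB := ihB (show j + 1 ≤ k + 1 by omega)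
    rw [show k + 1 - (j + 1) = k - j by omega] at hB
    rw [hB]
  | lam b ih =>
    simp only [subst]
    have hb := ih (show j + 1 ≤ k + 1 by omega)
    rw [show k + 1 - (j + 1) = k - j by omega] at hb
    rw [hb]
  | app b a ihb iha => simp only [subst]; rw [ihb h, iha h]
  | absurd b ih => simp only [subst]; rw [ih h]

end Tm

theorem Par.refl (a : Tm) : Par a a := by
  induction a with
  | star => exact .star
  | var x => exact .var x
  | bot => exact .bot
  | pi j A B ihA ihB => exact .pi ihA ihB
  | lam b ih => exact .lam ih
  | app b a ihb iha => exact .app ihb iha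
  | absurd b ih => exact .absurd ih

theorem Par.shift {t t' : Tm} (d c : ℕ) (h : Par t t') :
    Par (Tm.shift d c t) (Tm.shift d c t') := by
  induction h generalizing c with
  | star => exact .star
  | var x => simp only [Tm.shift]; split_ifs <;> apply Par.var
  | bot => exact .bot
  | pi _ _ ihA ihB => exact .pi (ihA c) (ihB (c + 1))
  | lam _ ih => exact .lam (ih (c + 1))
  | app _ _ ihb iha => exact .app (ihb c) (iha c)
  | @beta b b' a a' _ _ ihb iha =>
    rw [Tm.shift_subst (Nat.zero_le c)]
    simpa [Tm.shift] using Par.beta (ihb (c + 1)) (iha c)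
  | absurd _ ih => exact .absurd (ih c)

theorem Par.subst {t t' u u' : Tm} (k : ℕ) (hu : Par u u') (h : Par t t') :
    Par (Tm.subst k u t) (Tm.subst k u' t') := by
  induction h generalizing k with
  | star => exact .star
  | var x =>
    simp only [Tm.subst]; split_ifs
    · apply Par.var
    · exact Par.shift _ _ hu
    · apply Par.var
  | bot => exact .bot
  | pi _ _ ihA ihB => exact .pi (ihA k) (ihB (k + 1))
  | lam _ ih => exact .lam (ih (k + 1))
  | app _ _ ihb iha => exact .app (ihb k) (iha k)
  | @beta b b' a a' _ _ ihb iha =>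
    rw [Tm.subst_subst (Nat.zero_le k)]
    simpa [Tm.subst] using Par.beta (ihb (k + 1)) (iha k)
  | absurd _ ih => exact .absurd (ih k)

/-- Complete development. -/
def cd : Tm → Tm
  | .star => .star
  | .var x => .var x
  | .bot => .bot
  | .pi j A B => .pi j (cd A) (cd B)
  | .lam b => .lam (cd b)
  | .app (.lam b) a => Tm.subst 0 (cd a) (cd b)
  | .app b a => .app (cd b) (cd a)
  | .absurd b => .absurd (cd b)

theorem Par.lam_inv {b t : Tm} (h : Par (.lam b) t) : ∃ b', t = .lam b' ∧ Par b b' := by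
  cases h with
  | lam hb => exact ⟨_, rfl, hb⟩

theorem Par.triangle {t t' : Tm} (h : Par t t') : Par t' (cd t) := by
  induction h with
  | star => exact .star
  | var x => exact .var x
  | bot => exact .bot
  | pi _ _ ihA ihB => exact .pi ihA ihB
  | lam _ ih => exact .lam ih
  | @app b b' a a' hb ha ihb iha =>
    cases b with
    | lam b0 =>
      obtain ⟨b0', rfl, hb0⟩ := hb.lam_inv
      rw [show cd (Tm.lam b0) = Tm.lam (cd b0) from rfl] at ihb
      cases ihb with
      | lam hc =>
        exact (show Par (Tm.app (Tm.lam b0') a') (Tm.subst 0 (cd a) (cd b0)) from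
          Par.beta hc iha)
    | star => cases hb; exact .app ihb iha
    | var x => cases hb; exact .app ihb iha
    | bot => cases hb; exact .app ihb iha
    | pi j A B => cases hb with | pi _ _ => exact .app ihb iha
    | app b1 a1 => exact .app ihb iha
    | absurd b1 => cases hb with | absurd _ => exact .app ihb iha
  | @beta b b' a a' hb ha ihb iha =>
    exact Par.subst 0 iha ihb
  | absurd _ ih => exact .absurd ih

theorem Par.diamond {t a b : Tm} (ha : Par t a) (hb : Par t b) :
    ∃ c, Par a c ∧ Par b c := ⟨cd t, ha.triangle, hb.triangle⟩

theorem Pars.strip {t a b : Tm} (ha : Par t a) (hb : Pars t b) :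
    ∃ c, Pars a c ∧ Par b c := by
  induction hb with
  | refl => exact ⟨a, Relation.ReflTransGen.refl, ha⟩
  | tail _ hmn ih =>
    obtain ⟨c, hac, hmc⟩ := ih
    obtain ⟨d, hcd, hnd⟩ := Par.diamond hmc hmn
    exact ⟨d, hac.tail hcd, hnd⟩

theorem Pars.confluence {t a b : Tm} (ha : Pars t a) (hb : Pars t b) :
    ∃ c, Pars a c ∧ Pars b c := by
  induction hb with
  | refl => exact ⟨a, Relation.ReflTransGen.refl, ha⟩
  | tail _ hmn ih =>
    obtain ⟨c, hac, hmc⟩ := ih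
    obtain ⟨d, hnd, hcd⟩ := Pars.strip hmn hmc
    exact ⟨d, hac.tail hcd, hnd⟩

theorem Conv.refl (a : Tm) : Conv a a :=
  ⟨a, Relation.ReflTransGen.refl, Relation.ReflTransGen.refl⟩

theorem Conv.symm {a b : Tm} (h : Conv a b) : Conv b a :=
  ⟨h.choose, h.choose_spec.2, h.choose_spec.1⟩

theorem Conv.trans {a b c : Tm} (h1 : Conv a b) (h2 : Conv b c) : Conv a c := by
  obtain ⟨d, had, hbd⟩ := h1
  obtain ⟨e, hbe, hce⟩ := h2
  obtain ⟨f, hdf, hef⟩ := Pars.confluence hbd hbe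
  exact ⟨f, Relation.ReflTransGen.trans had hdf, Relation.ReflTransGen.trans hce hef⟩

theorem Pars.pi {j : ℕ} {A A' B B' : Tm} (hA : Pars A A') (hB : Pars B B') :
    Pars (.pi j A B) (.pi j A' B') := by
  induction hA with
  | refl =>
    induction hB with
    | refl => exact Relation.ReflTransGen.refl
    | tail _ h ih => exact ih.tail (.pi (Par.refl _) h)
  | tail _ h ih => exact ih.tail (.pi h (Par.refl _))

theorem Pars.lam {b b' : Tm} (hb : Pars b b') : Pars (.lam b) (.lam b') := by
  induction hb with
  | refl => exact Relation.ReflTransGen.refl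
  | tail _ h ih => exact ih.tail (.lam h)

theorem Pars.app {b b' a a' : Tm} (hb : Pars b b') (ha : Pars a a') :
    Pars (.app b a) (.app b' a') := by
  induction hb with
  | refl =>
    induction ha with
    | refl => exact Relation.ReflTransGen.refl
    | tail _ h ih => exact ih.tail (.app (Par.refl _) h)
  | tail _ h ih => exact ih.tail (.app h (Par.refl _))

theorem Pars.absurd {b b' : Tm} (hb : Pars b b') : Pars (.absurd b) (.absurd b') := by
  induction hb with
  | refl => exact Relation.ReflTransGen.refl
  | tail _ h ih => exact ih.tail (.absurd h)

theorem Par.deq {a b : Tm} (h : Par a b) : DEq a b := by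
  induction h with
  | star => exact .refl _
  | var x => exact .refl _
  | bot => exact .refl _
  | pi _ _ ihA ihB => exact .pi ihA ihB
  | lam _ ih => exact .lam ih
  | app _ _ ihb iha => exact .app ihb iha
  | @beta b b' a a' _ _ ihb iha =>
    exact DEq.trans (DEq.app (DEq.lam ihb) iha) (DEq.beta b' a')
  | absurd _ ih => exact .absurd ih

theorem Pars.deq {a b : Tm} (h : Pars a b) : DEq a b := by
  induction h with
  | refl => exact .refl _
  | tail _ h ih => exact ih.trans h.deq

/-- **Definitional equality coincides with joinability under parallel
reduction**: `A ≡ B` iff there is `C` with `A ⇒* C` and `B ⇒* C`. -/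
theorem deq_iff_joinable (A B : Tm) : DEq A B ↔ Conv A B := by
  constructor
  · intro h
    induction h with
    | refl a => exact Conv.refl a
    | sym _ ih => exact ih.symm
    | trans _ _ ih1 ih2 => exact ih1.trans ih2
    | beta b a =>
      exact ⟨Tm.subst 0 a b, Relation.ReflTransGen.single (Par.beta (Par.refl b) (Par.refl a)),
        Relation.ReflTransGen.refl⟩
    | pi _ _ ihA ihB =>
      obtain ⟨C, h1, h2⟩ := ihA
      obtain ⟨D, h3, h4⟩ := ihB
      exact ⟨_, Pars.pi h1 h3, Pars.pi h2 h4⟩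
    | lam _ ih =>
      obtain ⟨C, h1, h2⟩ := ih
      exact ⟨_, Pars.lam h1, Pars.lam h2⟩
    | app _ _ ihb iha =>
      obtain ⟨C, h1, h2⟩ := ihb
      obtain ⟨D, h3, h4⟩ := iha
      exact ⟨_, Pars.app h1 h3, Pars.app h2 h4⟩
    | absurd _ ih =>
      obtain ⟨C, h1, h2⟩ := ih
      exact ⟨_, Pars.absurd h1, Pars.absurd h2⟩
  · rintro ⟨C, h1, h2⟩
    exact h1.deq.trans h2.deq.sym
end

section
/- The subStraTT logical relation is cumulative: if j < k and the type interpretation ⟦A⟧_j is defined, then ⟦A⟧_k is defined; moreover if a ∈ ⟦A⟧_j then a ∈ ⟦A⟧_k. -/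
/-! The logical relation, stratified by well-founded induction on levels:
an inductive predicate `⟦A⟧ₖ` on closed types (`U`), parametrized by the
membership relation at strictly lower levels, together with a membership
relation `a ∈ ⟦A⟧ₖ` (`elU`) defined by recursion on the derivation of `⟦A⟧ₖ`;
the knot is tied by well-founded recursion on the level `k` (`el`). -/

/-- Inductive predicate on closed types at level `k`, with rules for `⋆`, `⊥`,
stratified dependent function types (domain at a strictly lower level `j < k`,
codomain interpreted at all members of the domain), and closure under parallel
reduction. `el` is the membership relation at strictly lower levels. -/
inductive U (el : ℕ → Tm → Tm → Prop) : ℕ → Tm → Type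
  | star {k} : U el k .star
  | bot {k} : U el k .bot
  | pi {k j A B} : j < k → U el j A →
      (∀ y, el j A y → U el k (Tm.subst 0 y B)) → U el k (.pi j A B)
  | red {k A B} : Par A B → U el k B → U el k A

/-- Membership `a ∈ ⟦A⟧ₖ`, by recursion on the derivation of `⟦A⟧ₖ`:
`A ∈ ⟦⋆⟧ₖ` iff `⟦A⟧ₖ`; `a ∈ ⟦⊥⟧ₖ` is false; `f ∈ ⟦Πx:^j A. B⟧ₖ` iff for all
`y ∈ ⟦A⟧ⱼ`, `f y ∈ ⟦B{y/x}⟧ₖ`; membership is preserved along reduction. -/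
def elU {el : ℕ → Tm → Tm → Prop} {k : ℕ} : {A : Tm} → U el k A → Tm → Prop
  | _, .star, a => Nonempty (U el k a)
  | _, .bot, _ => False
  | _, .pi _ _ hB, f => ∀ y hy, elU (hB y hy) (Tm.app f y)
  | _, .red _ h, a => elU h a

/-- The membership relation `a ∈ ⟦A⟧ₖ`, tying the knot by well-founded
recursion on the level `k`. -/
def el (k : ℕ) (A a : Tm) : Prop :=
  ∃ h : U (fun j B b => if h' : j < k then el j B b else False) k A, elU h a
termination_by k
decreasing_by all_goals exact h'

/-- Membership at strictly lower levels than `k`. -/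
def lowEl (k : ℕ) : ℕ → Tm → Tm → Prop :=
  fun j B b => if h' : j < k then el j B b else False

/-- The type interpretation `⟦A⟧ₖ` is defined (inhabited). -/
def interpTy (k : ℕ) (A : Tm) : Prop :=
  Nonempty (U (lowEl k) k A)

/-- Change the lower-level membership parameter of a `U` derivation, given
agreement below the level. -/
def U.mono {el₁ el₂ : ℕ → Tm → Tm → Prop} :
    ∀ {m A}, (∀ j B b, j < m → (el₁ j B b ↔ el₂ j B b)) → U el₁ m A → U el₂ m A
  | _, _, _, .star => .star
  | _, _, _, .bot => .bot
  | _, _, agree, .pi hj hA hB =>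
      .pi hj (U.mono (fun j' B b hj' => agree j' B b (hj'.trans hj)) hA)
        (fun y hy => U.mono agree (hB y ((agree _ _ _ hj).mpr hy)))
  | _, _, agree, .red r h => .red r (U.mono agree h)

theorem elU_mono {el₁ el₂ : ℕ → Tm → Tm → Prop} :
    ∀ {m A} (agree : ∀ j B b, j < m → (el₁ j B b ↔ el₂ j B b))
      (h : U el₁ m A) (a : Tm), elU h a → elU (U.mono agree h) a := by
  intro m A agree h
  induction h with
  | star =>
    intro a ha
    obtain ⟨h⟩ := (ha : Nonempty _)
    exact (⟨U.mono agree h⟩ : Nonempty _)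
  | bot => intro a ha; exact ha.elim
  | pi hj hA hB ihA ihB =>
    intro f hf y hy
    exact ihB y ((agree _ _ _ hj).mpr hy) agree _ (hf y ((agree _ _ _ hj).mpr hy))
  | red r h ih => intro a ha; exact ih agree a ha

/-- Lift a `U` derivation to a higher level. -/
def U.lift {el : ℕ → Tm → Tm → Prop} {k : ℕ} :
    ∀ {m A}, m ≤ k → U el m A → U el k A
  | _, _, _, .star => .star
  | _, _, _, .bot => .bot
  | _, _, hmk, .pi hj hA hB =>
      .pi (hj.trans_le hmk) hA (fun y hy => U.lift hmk (hB y hy))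
  | _, _, hmk, .red r h => .red r (U.lift hmk h)

theorem elU_lift {el : ℕ → Tm → Tm → Prop} {k : ℕ} :
    ∀ {m A} (hmk : m ≤ k) (h : U el m A) (a : Tm),
      elU h a → elU (U.lift hmk h) a := by
  intro m A hmk h
  induction h with
  | star =>
    intro a ha
    obtain ⟨h⟩ := (ha : Nonempty _)
    exact (⟨U.lift hmk h⟩ : Nonempty _)
  | bot => intro a ha; exact ha.elim
  | pi hj hA hB ihA ihB =>
    intro f hf y hy
    exact ihB y hy hmk _ (hf y hy)
  | red r h ih => intro a ha; exact ih hmk a ha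

theorem el_def (k : ℕ) (A a : Tm) :
    el k A a ↔ ∃ h : U (lowEl k) k A, elU h a := by
  rw [el]; rfl

theorem lowEl_agree {j k : ℕ} (hjk : j < k) :
    ∀ j' B b, j' < j → (lowEl j j' B b ↔ lowEl k j' B b) := by
  intro j' B b hj'
  simp [lowEl, hj', hj'.trans hjk]

/-- **Cumulativity of the logical relation**: if `j < k` then `⟦A⟧ⱼ` implies
`⟦A⟧ₖ`, and `a ∈ ⟦A⟧ⱼ` implies `a ∈ ⟦A⟧ₖ`. -/
theorem lr_cumulativity {j k : ℕ} (hjk : j < k) (A a : Tm) :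
    (interpTy j A → interpTy k A) ∧ (el j A a → el k A a) := by
  constructor
  · rintro ⟨h⟩
    exact ⟨U.lift hjk.le (U.mono (lowEl_agree hjk) h)⟩
  · intro ha
    rw [el_def] at ha ⊢
    obtain ⟨h, ha⟩ := ha
    exact ⟨U.lift hjk.le (U.mono (lowEl_agree hjk) h),
      elU_lift hjk.le _ _ (elU_mono (lowEl_agree hjk) h a ha)⟩
end
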